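/- Let 1 ≤ p and suppose for each i ∈ {1,...,q}, U_i ∈ ℝ^{n_i×d_i} satisfies α_i‖x‖_p ≤ ‖U_i x‖_p ≤ β_i‖x‖_p for all x ∈ ℝ^{d_i}. Then for all x ∈ ℝ^{d₁⋯d_q}, (∏_i α_i)‖x‖_p ≤ ‖(U₁ ⊗ ⋯ ⊗ U_q)x‖_p ≤ (∏_i β_i)‖x‖_p. -/

import Mathlib

open Matrix

/-- The Kronecker product of a family of `q` matrices, with rows and columns indexed by
tuples of indices. -/
def kronFamily {q : ℕ} {n d : Fin q → ℕ}
    (U : ∀ i : Fin q, Matrix (Fin (n i)) (Fin (d i)) ℝ) :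
    Matrix (∀ i : Fin q, Fin (n i)) (∀ i : Fin q, Fin (d i)) ℝ :=
  fun r c => ∏ i : Fin q, U i (r i) (c i)

/-- The vector `ℓ_p` norm: `(∑ i, |v i|^p)^(1/p)`. -/
noncomputable def lpNorm {ι : Type*} [Fintype ι] (p : ℝ) (v : ι → ℝ) : ℝ :=
  (∑ i, |v i| ^ p) ^ (1 / p)

lemma lpNorm_sum_nonneg {ι : Type*} [Fintype ι] (p : ℝ) (v : ι → ℝ) :
    0 ≤ ∑ i, |v i| ^ p :=
  Finset.sum_nonneg fun i _ => Real.rpow_nonneg (abs_nonneg _) _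

/-- From the `lpNorm` bounds we get bounds on the sums of `p`-th powers. -/
lemma sum_pow_bounds {ι κ : Type*} [Fintype ι] [Fintype κ] (p : ℝ) (hp : 1 ≤ p)
    (A : Matrix ι κ ℝ) (a b : ℝ) (ha : 0 ≤ a) (hb : 0 ≤ b)
    (hA : ∀ x : κ → ℝ, a * lpNorm p x ≤ lpNorm p (A.mulVec x) ∧
      lpNorm p (A.mulVec x) ≤ b * lpNorm p x) (x : κ → ℝ) :
    a ^ p * ∑ j, |x j| ^ p ≤ ∑ r, |A.mulVec x r| ^ p ∧
      ∑ r, |A.mulVec x r| ^ p ≤ b ^ p * ∑ j, |x j| ^ p := by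
  have hp0 : (0:ℝ) < p := lt_of_lt_of_le one_pos hp
  have hS : 0 ≤ ∑ j, |x j| ^ p := lpNorm_sum_nonneg p x
  have hT : 0 ≤ ∑ r, |A.mulVec x r| ^ p := lpNorm_sum_nonneg p _
  obtain ⟨h1, h2⟩ := hA x
  have hSr : ((∑ j, |x j| ^ p) ^ (1/p)) ^ p = ∑ j, |x j| ^ p := by
    rw [← Real.rpow_mul hS, one_div_mul_cancel hp0.ne', Real.rpow_one]
  have hTr : ((∑ r, |A.mulVec x r| ^ p) ^ (1/p)) ^ p = ∑ r, |A.mulVec x r| ^ p := by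
    rw [← Real.rpow_mul hT, one_div_mul_cancel hp0.ne', Real.rpow_one]
  constructor
  · calc a ^ p * ∑ j, |x j| ^ p
        = (a * lpNorm p x) ^ p := by
          rw [lpNorm, Real.mul_rpow ha (Real.rpow_nonneg hS _), hSr]
      _ ≤ (lpNorm p (A.mulVec x)) ^ p :=
          Real.rpow_le_rpow (mul_nonneg ha (Real.rpow_nonneg hS _)) h1 hp0.le
      _ = ∑ r, |A.mulVec x r| ^ p := by rw [lpNorm, hTr]
  · calc ∑ r, |A.mulVec x r| ^ p
        = (lpNorm p (A.mulVec x)) ^ p := by rw [lpNorm, hTr]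
      _ ≤ (b * lpNorm p x) ^ p :=
          Real.rpow_le_rpow (Real.rpow_nonneg hT _) h2 hp0.le
      _ = b ^ p * ∑ j, |x j| ^ p := by
          rw [lpNorm, Real.mul_rpow hb (Real.rpow_nonneg hS _), hSr]

lemma back_to_lp (p : ℝ) (hp : 1 ≤ p) (a S T : ℝ) (ha : 0 ≤ a) (hS : 0 ≤ S)
    (hle : a ^ p * S ≤ T) : a * S ^ (1/p) ≤ T ^ (1/p) := by
  have hp0 : (0:ℝ) < p := lt_of_lt_of_le one_pos hp
  have := Real.rpow_le_rpow (mul_nonneg (Real.rpow_nonneg ha _) hS) hle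
    (by positivity : (0:ℝ) ≤ 1/p)
  rwa [Real.mul_rpow (Real.rpow_nonneg ha _) hS, ← Real.rpow_mul ha,
    mul_one_div, div_self hp0.ne', Real.rpow_one] at this

/-- The key inductive step, in terms of sums of `p`-th powers. -/
lemma kron_sum_bounds : ∀ (q : ℕ) (n d : Fin q → ℕ) (p : ℝ), 1 ≤ p →
    ∀ (U : ∀ i : Fin q, Matrix (Fin (n i)) (Fin (d i)) ℝ) (α β : Fin q → ℝ),
    (∀ i, 0 ≤ α i) → (∀ i, 0 ≤ β i) →
    (∀ i : Fin q, ∀ x : Fin (d i) → ℝ,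
      α i * lpNorm p x ≤ lpNorm p ((U i).mulVec x) ∧
      lpNorm p ((U i).mulVec x) ≤ β i * lpNorm p x) →
    ∀ x : (∀ i : Fin q, Fin (d i)) → ℝ,
      (∏ i, α i) ^ p * ∑ c, |x c| ^ p ≤ ∑ r, |(kronFamily U).mulVec x r| ^ p ∧
      ∑ r, |(kronFamily U).mulVec x r| ^ p ≤ (∏ i, β i) ^ p * ∑ c, |x c| ^ p := by
  intro q
  induction q with
  | zero =>
    intro n d p hp U α β hα hβ h x
    have hm : ∀ r, (kronFamily U).mulVec x r = x default := by
      intro r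
      simp [kronFamily, Matrix.mulVec, dotProduct, Fintype.sum_unique]
    rw [Fintype.sum_unique fun r => |(kronFamily U).mulVec x r| ^ p,
        Fintype.sum_unique fun c => |x c| ^ p, hm]
    simp
  | succ q IH =>
    intro n d p hp U α β hα hβ h x
    have hp0 : (0:ℝ) < p := lt_of_lt_of_le one_pos hp
    set A := U 0 with hA
    set V : ∀ i : Fin q, Matrix (Fin (n i.succ)) (Fin (d i.succ)) ℝ := fun i => U i.succ with hV
    set K := kronFamily V with hK
    set w : Fin (d 0) → (∀ i : Fin q, Fin (d i.succ)) → ℝ :=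
      fun c0 c' => x (Fin.cons c0 c') with hw
    -- key identity
    have key : ∀ (r0 : Fin (n 0)) (r' : ∀ i : Fin q, Fin (n i.succ)),
        (kronFamily U).mulVec x (Fin.cons r0 r')
          = A.mulVec (fun c0 => K.mulVec (w c0) r') r0 := by
      intro r0 r'
      show ∑ c, kronFamily U (Fin.cons r0 r') c * x c = _
      rw [← (Fin.consEquiv fun i => Fin (d i)).sum_comp
        (fun c => kronFamily U (Fin.cons r0 r') c * x c), Fintype.sum_prod_type]
      show _ = ∑ c0, A r0 c0 * (∑ c', K r' c' * w c0 c')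
      refine Finset.sum_congr rfl fun c0 _ => ?_
      rw [Finset.mul_sum]
      refine Finset.sum_congr rfl fun c' _ => ?_
      have : kronFamily U (Fin.cons r0 r') (Fin.consEquiv (fun i => Fin (d i)) (c0, c'))
          = A r0 c0 * K r' c' := by
        have hc : ((Fin.consEquiv fun i => Fin (d i)) (c0, c')) = Fin.cons c0 c' := rfl
        rw [hc]
        unfold A K V
        unfold kronFamily
        rw [Fin.prod_univ_succ]
        simp
      rw [this, mul_assoc]
      rfl
    -- reindex the row sum
    have hTsum : ∑ r, |(kronFamily U).mulVec x r| ^ p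
        = ∑ r', ∑ r0, |A.mulVec (fun c0 => K.mulVec (w c0) r') r0| ^ p := by
      rw [← (Fin.consEquiv fun i => Fin (n i)).sum_comp
        (fun r => |(kronFamily U).mulVec x r| ^ p), Fintype.sum_prod_type]
      rw [Finset.sum_comm]
      exact Finset.sum_congr rfl fun r' _ => Finset.sum_congr rfl fun r0 _ => by
        rw [show (Fin.consEquiv fun i => Fin (n i)) (r0, r') = Fin.cons r0 r' from rfl, key]
    -- reindex the column sum
    have hSsum : ∑ c, |x c| ^ p = ∑ c0, ∑ c', |w c0 c'| ^ p := by
      rw [← (Fin.consEquiv fun i => Fin (d i)).sum_comp (fun c => |x c| ^ p),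
        Fintype.sum_prod_type]
      rfl
    set M : ℝ := ∑ c0, ∑ r', |K.mulVec (w c0) r'| ^ p with hM
    -- bounds relating T and M via A
    have hAstep : ∀ r', (α 0) ^ p * ∑ c0, |K.mulVec (w c0) r'| ^ p
          ≤ ∑ r0, |A.mulVec (fun c0 => K.mulVec (w c0) r') r0| ^ p ∧
        ∑ r0, |A.mulVec (fun c0 => K.mulVec (w c0) r') r0| ^ p
          ≤ (β 0) ^ p * ∑ c0, |K.mulVec (w c0) r'| ^ p := fun r' =>
      sum_pow_bounds p hp A (α 0) (β 0) (hα 0) (hβ 0) (h 0) _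
    -- bounds relating M and S via IH
    have hKstep : ∀ c0, (∏ i : Fin q, α i.succ) ^ p * ∑ c', |w c0 c'| ^ p
          ≤ ∑ r', |K.mulVec (w c0) r'| ^ p ∧
        ∑ r', |K.mulVec (w c0) r'| ^ p
          ≤ (∏ i : Fin q, β i.succ) ^ p * ∑ c', |w c0 c'| ^ p := fun c0 =>
      IH (fun i => n i.succ) (fun i => d i.succ) p hp V (fun i => α i.succ)
        (fun i => β i.succ) (fun i => hα i.succ) (fun i => hβ i.succ)
        (fun i => h i.succ) (w c0)
    have hMlow : (∏ i : Fin q, α i.succ) ^ p * ∑ c, |x c| ^ p ≤ M := by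
      rw [hSsum, Finset.mul_sum]
      exact Finset.sum_le_sum fun c0 _ => (hKstep c0).1
    have hMhigh : M ≤ (∏ i : Fin q, β i.succ) ^ p * ∑ c, |x c| ^ p := by
      rw [hSsum, Finset.mul_sum]
      exact Finset.sum_le_sum fun c0 _ => (hKstep c0).2
    have hMcomm : M = ∑ r', ∑ c0, |K.mulVec (w c0) r'| ^ p := Finset.sum_comm
    have hTlow : (α 0) ^ p * M ≤ ∑ r, |(kronFamily U).mulVec x r| ^ p := by
      rw [hTsum, hMcomm, Finset.mul_sum]
      exact Finset.sum_le_sum fun r' _ => (hAstep r').1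
    have hThigh : ∑ r, |(kronFamily U).mulVec x r| ^ p ≤ (β 0) ^ p * M := by
      rw [hTsum, hMcomm, Finset.mul_sum]
      exact Finset.sum_le_sum fun r' _ => (hAstep r').2
    have hprodα : (∏ i : Fin (q+1), α i) ^ p = (α 0) ^ p * (∏ i : Fin q, α i.succ) ^ p := by
      rw [Fin.prod_univ_succ, Real.mul_rpow (hα 0) (Finset.prod_nonneg fun i _ => hα i.succ)]
    have hprodβ : (∏ i : Fin (q+1), β i) ^ p = (β 0) ^ p * (∏ i : Fin q, β i.succ) ^ p := by
      rw [Fin.prod_univ_succ, Real.mul_rpow (hβ 0) (Finset.prod_nonneg fun i _ => hβ i.succ)]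
    constructor
    · calc (∏ i, α i) ^ p * ∑ c, |x c| ^ p
          = (α 0) ^ p * ((∏ i : Fin q, α i.succ) ^ p * ∑ c, |x c| ^ p) := by
            rw [hprodα, mul_assoc]
        _ ≤ (α 0) ^ p * M :=
            mul_le_mul_of_nonneg_left hMlow (Real.rpow_nonneg (hα 0) _)
        _ ≤ _ := hTlow
    · calc ∑ r, |(kronFamily U).mulVec x r| ^ p
          ≤ (β 0) ^ p * M := hThigh
        _ ≤ (β 0) ^ p * ((∏ i : Fin q, β i.succ) ^ p * ∑ c, |x c| ^ p) :=
            mul_le_mul_of_nonneg_left hMhigh (Real.rpow_nonneg (hβ 0) _)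
        _ = (∏ i, β i) ^ p * ∑ c, |x c| ^ p := by rw [hprodβ, mul_assoc]

/-- If each `U_i` is an `(ℓ_p, α_i, β_i)`-conditioned matrix, then `U₁ ⊗ ⋯ ⊗ U_q` is
`(ℓ_p, ∏ α_i, ∏ β_i)`-conditioned. -/
theorem stmt_6 (q : ℕ) (n d : Fin q → ℕ) (p : ℝ) (hp : 1 ≤ p)
    (U : ∀ i : Fin q, Matrix (Fin (n i)) (Fin (d i)) ℝ)
    (α β : Fin q → ℝ) (hα : ∀ i, 0 < α i) (hαβ : ∀ i, α i ≤ β i)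
    (h : ∀ i : Fin q, ∀ x : Fin (d i) → ℝ,
      α i * lpNorm p x ≤ lpNorm p ((U i).mulVec x) ∧
      lpNorm p ((U i).mulVec x) ≤ β i * lpNorm p x) :
    ∀ x : (∀ i : Fin q, Fin (d i)) → ℝ,
      (∏ i, α i) * lpNorm p x ≤ lpNorm p ((kronFamily U).mulVec x) ∧
      lpNorm p ((kronFamily U).mulVec x) ≤ (∏ i, β i) * lpNorm p x := by
  intro x
  have hα' : ∀ i, 0 ≤ α i := fun i => (hα i).le
  have hβ' : ∀ i, 0 ≤ β i := fun i => le_trans (hα i).le (hαβ i)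
  obtain ⟨h1, h2⟩ := kron_sum_bounds q n d p hp U α β hα' hβ' h x
  constructor
  · exact back_to_lp p hp _ _ _ (Finset.prod_nonneg fun i _ => hα' i)
      (lpNorm_sum_nonneg p x) h1
  · have h2' : (1:ℝ) ^ p * ∑ r, |(kronFamily U).mulVec x r| ^ p
        ≤ (∏ i, β i) ^ p * ∑ c, |x c| ^ p := by
      rw [Real.one_rpow, one_mul]; exact h2
    have := back_to_lp p hp 1 _ _ zero_le_one (lpNorm_sum_nonneg p _) h2'
    rw [one_mul] at this
    calc lpNorm p ((kronFamily U).mulVec x)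
        = (∑ r, |(kronFamily U).mulVec x r| ^ p) ^ (1/p) := rfl
      _ ≤ ((∏ i, β i) ^ p * ∑ c, |x c| ^ p) ^ (1/p) := this
      _ = (∏ i, β i) * lpNorm p x := by
          have hp0 : (0:ℝ) < p := lt_of_lt_of_le one_pos hp
          rw [lpNorm, Real.mul_rpow (Real.rpow_nonneg (Finset.prod_nonneg fun i _ => hβ' i) _)
            (lpNorm_sum_nonneg p x), ← Real.rpow_mul (Finset.prod_nonneg fun i _ => hβ' i),
            mul_one_div, div_self hp0.ne', Real.rpow_one]
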